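/- arXiv:0905.3359 — 2 statements merged into one kernel-verified Lean document; each statement's English description precedes it below -/
import Mathlib

section
/- Given a graph G and an internal search schedule S, if S clears all edges in the edge game then S also clears all nodes (and edges) in the node game. -/
open SimpleGraph

/-- A move in a graph-search game: place a searcher, remove a searcher,
or slide a searcher along an edge. -/
inductive GMove (V : Type*) where
  | place (v : V)
  | remove (v : V)
  | slide (u v : V)

namespace GMove

/-- The node (if any) entered by the move. -/
def target {V : Type*} : GMove V → Option V
  | place v => some v
  | remove _ => none
  | slide _ v => some v

/-- The edge (if any) traversed by the move. -/
def traversed {V : Type*} : GMove V → Option (Sym2 V)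
  | slide u v => some s(u, v)
  | _ => none

end GMove

variable {V : Type*}

open Classical in
/-- Number of searchers located at each node after `t` moves
(the move between time `t` and `t+1` is `S t`). -/
noncomputable def occ (S : ℕ → GMove V) : ℕ → V → ℕ
  | 0 => fun _ => 0
  | t + 1 => fun x =>
    match S t with
    | .place v => if x = v then occ S t x + 1 else occ S t x
    | .remove v => if x = v then occ S t x - 1 else occ S t x
    | .slide u v =>
        if x = v then occ S t x + 1 else if x = u then occ S t x - 1 else occ S t x

/-- Number of searchers inside the graph after `t` moves. -/
def sn (S : ℕ → GMove V) : ℕ → ℕ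
  | 0 => 0
  | t + 1 =>
    match S t with
    | .place _ => sn S t + 1
    | .remove _ => sn S t - 1
    | .slide _ _ => sn S t

/-- A legal search schedule on `G`: slides go along edges starting from an occupied
node, and removals take place at occupied nodes. -/
def Legal (G : SimpleGraph V) (S : ℕ → GMove V) : Prop :=
  ∀ t, match S t with
    | .place _ => True
    | .remove v => 0 < occ S t v
    | .slide u v => G.Adj u v ∧ 0 < occ S t u

/-- An internal schedule never removes searchers from the graph. -/
def Internal (S : ℕ → GMove V) : Prop := ∀ t v, S t ≠ GMove.remove v

/-- A rooted schedule places searchers only at the root `r`. -/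
def RootedAt (S : ℕ → GMove V) (r : V) : Prop := ∀ t v, S t = GMove.place v → v = r

/-- The set of n-dirty nodes of the node game: initially all nodes are n-dirty;
after a move, a node is n-dirty iff it is joined to a previously n-dirty node by a
path all of whose nodes are unguarded. -/
def ndirty (G : SimpleGraph V) (S : ℕ → GMove V) : ℕ → Set V
  | 0 => Set.univ
  | t + 1 =>
    { u | ∃ w, w ∈ ndirty G S t ∧ ∃ p : G.Walk u w, ∀ x ∈ p.support, occ S (t + 1) x = 0 }

/-- The set of n-dirty edges: edges incident to an n-dirty node. -/
def nEdgeDirty (G : SimpleGraph V) (S : ℕ → GMove V) (t : ℕ) : Set (Sym2 V) :=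
  { e | e ∈ G.edgeSet ∧ ∃ v ∈ e, v ∈ ndirty G S t }

/-- The set of e-dirty edges of the edge game: initially all edges are e-dirty;
a traversed edge is cleared, and an edge is recontaminated when joined to a
(still) e-dirty edge by a path whose interior nodes are unguarded. -/
def edirty (G : SimpleGraph V) (S : ℕ → GMove V) : ℕ → Set (Sym2 V)
  | 0 => G.edgeSet
  | t + 1 =>
    (edirty G S t \ { e | (S t).traversed = some e }) ∪
      { e | ∃ x y q q', e = s(x, y) ∧ G.Adj x y ∧ G.Adj q q' ∧
          (s(q, q') ∈ edirty G S t ∧ (S t).traversed ≠ some s(q, q')) ∧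
          ∃ p : G.Walk y q, ∀ z ∈ p.support, occ S (t + 1) z = 0 }

/-- A node is e-dirty iff it is unguarded and adjacent to an e-dirty edge. -/
def edirtyNode (G : SimpleGraph V) (S : ℕ → GMove V) (t : ℕ) : Set V :=
  { v | occ S t v = 0 ∧ ∃ e ∈ edirty G S t, v ∈ e }

/-- The set of m-dirty edges of the mixed edge game: as in the edge game, but in
addition an edge both of whose endpoints are guarded becomes m-clear. -/
def mdirty (G : SimpleGraph V) (S : ℕ → GMove V) : ℕ → Set (Sym2 V)
  | 0 => G.edgeSet
  | t + 1 =>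
    (mdirty G S t \
        ({ e | (S t).traversed = some e } ∪ { e | ∀ v ∈ e, 0 < occ S (t + 1) v })) ∪
      { e | ∃ x y q q', e = s(x, y) ∧ G.Adj x y ∧ G.Adj q q' ∧
          (s(q, q') ∈ mdirty G S t ∧ (S t).traversed ≠ some s(q, q') ∧
            ¬ (∀ v ∈ (s(q, q') : Sym2 V), 0 < occ S (t + 1) v)) ∧
          ∃ p : G.Walk y q, ∀ z ∈ p.support, occ S (t + 1) z = 0 }

/-- A node is m-dirty iff it is unguarded and adjacent to an m-dirty edge. -/
def mdirtyNode (G : SimpleGraph V) (S : ℕ → GMove V) (t : ℕ) : Set V :=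
  { v | occ S t v = 0 ∧ ∃ e ∈ mdirty G S t, v ∈ e }

/-- The n-clear subgraph: n-clear nodes and all edges of `G` between them. -/
def nclearSubgraph (G : SimpleGraph V) (S : ℕ → GMove V) (t : ℕ) : G.Subgraph where
  verts := (ndirty G S t)ᶜ
  Adj a b := G.Adj a b ∧ a ∉ ndirty G S t ∧ b ∉ ndirty G S t
  adj_sub h := h.1
  edge_vert h := h.2.1
  symm := ⟨fun a b h => ⟨h.1.symm, h.2.2, h.2.1⟩⟩

/-- The e-clear subgraph: e-clear nodes and e-clear edges. -/
def eclearSubgraph (G : SimpleGraph V) (S : ℕ → GMove V) (t : ℕ) : G.Subgraph where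
  verts := { v | v ∉ edirtyNode G S t } ∪ { v | ∃ e ∈ G.edgeSet \ edirty G S t, v ∈ e }
  Adj a b := G.Adj a b ∧ s(a, b) ∈ G.edgeSet \ edirty G S t
  adj_sub h := h.1
  edge_vert {a b} h := Or.inr ⟨s(a, b), h.2, Sym2.mem_mk_left a b⟩
  symm := ⟨fun a b h => ⟨h.1.symm, by rw [Sym2.eq_swap]; exact h.2⟩⟩

lemma SimpleGraph.Connected.exists_adj {G : SimpleGraph V} (hconn : G.Connected)
    (hne : G.edgeSet.Nonempty) (v : V) : ∃ w, G.Adj v w := by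
  obtain ⟨⟨_, _⟩, hab⟩ := hne
  have := SimpleGraph.Adj.nontrivial hab
  exact hconn.preconnected.exists_adj_of_nontrivial v

lemma edirty_subset_edgeSet (G : SimpleGraph V) (S : ℕ → GMove V) (t : ℕ) :
    edirty G S t ⊆ G.edgeSet := by
  induction t with
  | zero => exact subset_rfl
  | succ t ih =>
    rintro e (⟨he, -⟩ | ⟨x, y, q, q', rfl, hxy, -⟩)
    · exact ih he
    · exact hxy

lemma occ_succ_pos_of_eq_slide {S : ℕ → GMove V} {t : ℕ} {a b : V} (h : S t = .slide a b) :
    0 < occ S (t + 1) b := by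
  simp [occ, h]

/-- A searcher traversing `s(w, z)` is at `w` either before or after the move. -/
lemma traversed_ne_of_occ_eq_zero {G : SimpleGraph V} {S : ℕ → GMove V} (hL : Legal G S)
    {t : ℕ} {w : V} (hw : occ S t w = 0) (hw' : occ S (t + 1) w = 0) (z : V) :
    (S t).traversed ≠ some s(w, z) := by
  intro hT
  cases hS : S t with
  | place v => simp [hS, GMove.traversed] at hT
  | remove v => simp [hS, GMove.traversed] at hT
  | slide a b =>
    have hleg : G.Adj a b ∧ 0 < occ S t a := by simpa [hS] using hL t
    rw [hS, GMove.traversed, Option.some_inj] at hT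
    rcases Sym2.eq_iff.mp hT with ⟨rfl, -⟩ | ⟨-, rfl⟩
    · omega
    · have := occ_succ_pos_of_eq_slide hS
      omega

/-- At an unguarded node, the recontamination path of the node game also recontaminates an
edge in the edge game, since the e-dirty edge at its far end cannot have been traversed. -/
lemma ndirty_subset_edirtyNode {G : SimpleGraph V} (hG : ∀ v, ∃ w, G.Adj v w)
    {S : ℕ → GMove V} (hL : Legal G S) (t : ℕ) : ndirty G S t ⊆ edirtyNode G S t := by
  induction t with
  | zero =>
    intro v _
    obtain ⟨w, hvw⟩ := hG v
    exact ⟨rfl, s(v, w), hvw, Sym2.mem_mk_left _ _⟩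
  | succ t ih =>
    rintro u ⟨w, hw, p, hp⟩
    obtain ⟨hw0, e, he, hwe⟩ := ih hw
    obtain ⟨z, rfl⟩ := Sym2.mem_iff_exists.mp hwe
    have hwz : G.Adj w z := edirty_subset_edgeSet G S t he
    have hnot := traversed_ne_of_occ_eq_zero hL hw0 (hp w p.end_mem_support) z
    obtain ⟨n, hun⟩ := hG u
    exact ⟨hp u p.start_mem_support, s(n, u),
      Or.inr ⟨n, u, w, z, rfl, hun.symm, hwz, ⟨he, hnot⟩, p, hp⟩, Sym2.mem_mk_right _ _⟩

theorem stmt4_general {V : Type*} (G : SimpleGraph V) (hconn : G.Connected)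
    (hne : G.edgeSet.Nonempty) (S : ℕ → GMove V) (hL : Legal G S)
    (T : ℕ) (h : edirty G S T = ∅) :
    ndirty G S T = ∅ ∧ nEdgeDirty G S T = ∅ := by
  have hnodes : ndirty G S T = ∅ := by
    refine Set.eq_empty_of_forall_notMem fun v hv => ?_
    obtain ⟨-, e, he, -⟩ := ndirty_subset_edirtyNode (hconn.exists_adj hne) hL T hv
    simp [h] at he
  refine ⟨hnodes, ?_⟩
  ext e
  simp [nEdgeDirty, hnodes]

/-- If an internal search schedule clears all edges in the edge game, then it also
clears all nodes (and all edges) in the node game. -/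
theorem stmt4 {V : Type*} (G : SimpleGraph V) (hconn : G.Connected)
    (hne : G.edgeSet.Nonempty) (S : ℕ → GMove V) (hL : Legal G S) (hI : Internal S)
    (T : ℕ) (h : edirty G S T = ∅) :
    ndirty G S T = ∅ ∧ nEdgeDirty G S T = ∅ :=
  stmt4_general G hconn hne S hL T h
end

section
/- Let T be a tree and S an internal rooted search schedule on T. If S is monotone and connected in the node game, then at every time step the e-clear node set equals the n-clear node set and the e-clear edge set equals the n-clear edge set; consequently S is also monotone and connected in the edge game. -/
open SimpleGraph

variable {V : Type*}

/-!
By induction on `t`, the e-dirty edges are exactly the edges at n-dirty nodes. Both games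
spread contamination along the same unguarded walks, so the only danger is an edge `vx` at an
n-dirty node `v` that a searcher enters at step `t`. That searcher is either the first one,
placed at the root while everything is still dirty, or it slides in from a clear neighbour
`u ≠ x`. In a tree every walk between two neighbours of `v` passes through `v`, so the
connected clear subgraph cannot contain both `u` and `x`: `x` is still n-dirty, and `vx` stays
dirty in both games.
-/

namespace SimpleGraph

variable {G : SimpleGraph V}

theorem IsAcyclic.mem_support_of_adj_of_adj (hG : G.IsAcyclic) {a b c : V}
    (hac : G.Adj a c) (hbc : G.Adj b c) (hab : a ≠ b) (p : G.Walk a b) : c ∈ p.support := by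
  have hbridge := isBridge_iff_forall_walk_mem_edges.mp
    (isAcyclic_iff_forall_adj_isBridge.mp hG hac) (p.concat hbc)
  rw [Walk.edges_concat, List.concat_eq_append, List.mem_append, List.mem_singleton] at hbridge
  rcases hbridge with h | h
  · exact p.snd_mem_support_of_mem_edges h
  · exact absurd (Sym2.congr_left.mp h) hab

theorem Subgraph.Connected.mem_verts_of_adj_of_adj {H : G.Subgraph} (hH : H.Connected)
    (hG : G.IsAcyclic) {a b c : V} (ha : a ∈ H.verts) (hb : b ∈ H.verts) (hab : a ≠ b)
    (hac : G.Adj a c) (hbc : G.Adj b c) : c ∈ H.verts := by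
  obtain ⟨p⟩ := hH.coe.preconnected ⟨a, ha⟩ ⟨b, hb⟩
  have hc : c ∈ (p.map H.hom).support := hG.mem_support_of_adj_of_adj hac hbc hab _
  rw [Walk.support_map, List.mem_map] at hc
  obtain ⟨d, -, rfl⟩ := hc
  exact d.property

end SimpleGraph

section Occupation

variable {S : ℕ → GMove V} {t : ℕ} {x : V}

theorem occ_succ_pos_of_target (h : (S t).target = some x) : 0 < occ S (t + 1) x := by
  rcases hS : S t with v | v | ⟨u, v⟩ <;>
    simp only [hS, GMove.target, Option.some.injEq, reduceCtorEq] at h <;>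
    subst h <;> simp [occ, hS]

theorem target_eq_of_occ_succ_pos (h0 : occ S t x = 0) (h1 : 0 < occ S (t + 1) x) :
    (S t).target = some x := by
  rcases hS : S t with v | v | ⟨u, v⟩ <;> simp only [occ, hS] at h1 <;> split_ifs at h1 <;>
    simp_all [GMove.target]

theorem Legal.exists_eq_place {G : SimpleGraph V} (hL : Legal G S) (h : ∀ v, occ S t v = 0) :
    ∃ v, S t = .place v := by
  have := hL t
  rcases hS : S t with v | v | ⟨u, v⟩ <;> simp only [hS, h] at this
  · exact ⟨v, rfl⟩
  · exact absurd this (lt_irrefl 0)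
  · exact absurd this.2 (lt_irrefl 0)

theorem Legal.traversed_ne_of_occ_eq_zero {G : SimpleGraph V} (hL : Legal G S) {e : Sym2 V}
    (hx : x ∈ e) (h0 : occ S t x = 0) (h1 : occ S (t + 1) x = 0) :
    (S t).traversed ≠ some e := by
  intro h
  rcases hS : S t with v | v | ⟨u, v⟩ <;>
    simp only [hS, GMove.traversed, reduceCtorEq, Option.some.injEq] at h
  subst h
  rcases Sym2.mem_iff.mp hx with rfl | rfl
  · have := hL t
    simp only [hS, h0] at this
    exact absurd this.2 (lt_irrefl 0)
  · exact (occ_succ_pos_of_target (by simp [hS, GMove.target])).ne' h1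

end Occupation

section NodeGame

variable {G : SimpleGraph V} {S : ℕ → GMove V} {t : ℕ} {u v : V}

theorem occ_eq_zero_of_mem_ndirty (h : v ∈ ndirty G S t) : occ S t v = 0 := by
  cases t with
  | zero => rfl
  | succ t =>
    obtain ⟨w, -, p, hp⟩ := h
    exact hp v p.start_mem_support

theorem mem_ndirty_succ (hv : v ∈ ndirty G S t) (h0 : occ S (t + 1) v = 0) :
    v ∈ ndirty G S (t + 1) :=
  ⟨v, hv, .nil, by simpa using h0⟩

theorem mem_ndirty_of_walk (p : G.Walk v u) (hp : ∀ x ∈ p.support, occ S t x = 0)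
    (hu : u ∈ ndirty G S t) : v ∈ ndirty G S t := by
  cases t with
  | zero => trivial
  | succ t =>
    obtain ⟨w, hw, q, hq⟩ := hu
    exact ⟨w, hw, p.append q, fun x hx =>
      ((Walk.mem_support_append_iff p q).mp hx).elim (hp x) (hq x)⟩

theorem mem_ndirty_of_adj (hvu : G.Adj v u) (hv : occ S t v = 0) (hu : u ∈ ndirty G S t) :
    v ∈ ndirty G S t :=
  mem_ndirty_of_walk hvu.toWalk (by simp [hv, occ_eq_zero_of_mem_ndirty hu]) hu

theorem eq_zero_of_root_mem_ndirty (hL : Legal G S) {r : V} (hR : RootedAt S r)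
    (hmono : ∀ t, ndirty G S (t + 1) ⊆ ndirty G S t) : ∀ {t}, r ∈ ndirty G S t → t = 0
  | 0, _ => rfl
  | t + 1, h => by
    obtain rfl := eq_zero_of_root_mem_ndirty hL hR hmono (hmono t h)
    obtain ⟨v, hS⟩ := hL.exists_eq_place (t := 0) fun _ => rfl
    have hr : (S 0).target = some r := by simp [hS, GMove.target, hR 0 v hS]
    exact absurd (occ_eq_zero_of_mem_ndirty h) (occ_succ_pos_of_target hr).ne'

end NodeGame

structure IsMonotoneConnectedSearch (G : SimpleGraph V) (S : ℕ → GMove V) (r : V) : Prop where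
  legal : Legal G S
  rootedAt : RootedAt S r
  ndirty_succ_subset : ∀ t : ℕ, ndirty G S (t + 1) ⊆ ndirty G S t
  connected : ∀ t : ℕ, 1 ≤ t → (nclearSubgraph G S t).Connected

namespace IsMonotoneConnectedSearch

variable {G : SimpleGraph V} {S : ℕ → GMove V} {r : V} {t : ℕ} {v x : V}

theorem mem_ndirty_succ_of_adj (hS : IsMonotoneConnectedSearch G S r) (hG : G.IsAcyclic)
    (hv : v ∈ ndirty G S t) (hvx : G.Adj v x) (htr : (S t).traversed ≠ some s(v, x)) :
    v ∈ ndirty G S (t + 1) ∨ x ∈ ndirty G S (t + 1) := by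
  by_cases hv1 : occ S (t + 1) v = 0
  · exact .inl (mem_ndirty_succ hv hv1)
  have hentered :=
    target_eq_of_occ_succ_pos (occ_eq_zero_of_mem_ndirty hv) (Nat.pos_of_ne_zero hv1)
  have hx : x ∈ ndirty G S t := by
    rcases hSt : S t with w | w | ⟨u, w⟩ <;>
      simp only [hSt, GMove.target, Option.some.injEq, reduceCtorEq] at hentered <;> subst w
    · obtain rfl := eq_zero_of_root_mem_ndirty hS.legal hS.rootedAt hS.ndirty_succ_subset
        (hS.rootedAt t _ hSt ▸ hv)
      trivial
    · obtain ⟨huv, hu⟩ : G.Adj u v ∧ 0 < occ S t u := by simpa [hSt] using hS.legal t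
      have hux : u ≠ x := by
        rintro rfl
        exact htr (by simp [hSt, GMove.traversed, Sym2.eq_swap])
      have ht : 1 ≤ t := Nat.pos_of_ne_zero (by rintro rfl; exact hu.ne' rfl)
      by_contra hx
      exact (hS.connected t ht).mem_verts_of_adj_of_adj hG
        (fun h => hu.ne' (occ_eq_zero_of_mem_ndirty h)) hx hux huv hvx.symm hv
  refine .inr (mem_ndirty_succ hx ?_)
  by_contra hx1
  have hx_entered :=
    target_eq_of_occ_succ_pos (occ_eq_zero_of_mem_ndirty hx) (Nat.pos_of_ne_zero hx1)
  exact hvx.ne (Option.some.inj (hentered.symm.trans hx_entered))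

end IsMonotoneConnectedSearch

section EdgeGame

variable {G : SimpleGraph V} {S : ℕ → GMove V} {r : V} {t : ℕ}

theorem IsMonotoneConnectedSearch.edirty_succ_subset (hS : IsMonotoneConnectedSearch G S r)
    (hG : G.IsAcyclic) (ih : edirty G S t = nEdgeDirty G S t) :
    edirty G S (t + 1) ⊆ nEdgeDirty G S (t + 1) := by
  rintro e (⟨he, htr⟩ | ⟨x, y, q, q', rfl, hxy, hqq', ⟨hq, hqtr⟩, p, hp⟩)
  · rw [ih] at he
    obtain ⟨heE, v, hve, hv⟩ := he
    obtain ⟨x, rfl⟩ := Sym2.mem_iff_exists.mp hve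
    rcases hS.mem_ndirty_succ_of_adj hG hv heE htr with h | h
    · exact ⟨heE, v, Sym2.mem_mk_left _ _, h⟩
    · exact ⟨heE, x, Sym2.mem_mk_right _ _, h⟩
  · refine ⟨hxy, y, Sym2.mem_mk_right _ _, mem_ndirty_of_walk p hp ?_⟩
    rw [ih] at hq
    obtain ⟨-, v, hv, hvd⟩ := hq
    have hq0 : occ S (t + 1) q = 0 := hp q p.end_mem_support
    rcases Sym2.mem_iff.mp hv with rfl | rfl
    · exact mem_ndirty_succ hvd hq0
    · rcases hS.mem_ndirty_succ_of_adj hG hvd hqq'.symm (by rwa [Sym2.eq_swap]) with h | h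
      · exact mem_ndirty_of_adj hqq' hq0 h
      · exact h

theorem nEdgeDirty_succ_subset (hL : Legal G S) (hadj : ∀ v, ∃ w, G.Adj v w)
    (ih : edirty G S t = nEdgeDirty G S t) : nEdgeDirty G S (t + 1) ⊆ edirty G S (t + 1) := by
  rintro e ⟨he, v, hve, w, hw, p, hp⟩
  obtain ⟨b, rfl⟩ := Sym2.mem_iff_exists.mp hve
  obtain ⟨w', hww'⟩ := hadj w
  have htr := hL.traversed_ne_of_occ_eq_zero (Sym2.mem_mk_left w w')
    (occ_eq_zero_of_mem_ndirty hw) (hp w p.end_mem_support)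
  refine .inr ⟨b, v, w, w', Sym2.eq_swap, G.adj_symm he, hww', ⟨?_, htr⟩, p, hp⟩
  rw [ih]
  exact ⟨hww', w, Sym2.mem_mk_left _ _, hw⟩

theorem IsMonotoneConnectedSearch.edirty_eq_nEdgeDirty (hS : IsMonotoneConnectedSearch G S r)
    (hG : G.IsAcyclic) (hadj : ∀ v, ∃ w, G.Adj v w) (t : ℕ) :
    edirty G S t = nEdgeDirty G S t := by
  induction t with
  | zero =>
    ext e
    induction e using Sym2.ind
    simp [edirty, nEdgeDirty, ndirty]
  | succ t ih =>
    exact (hS.edirty_succ_subset hG ih).antisymm (nEdgeDirty_succ_subset hS.legal hadj ih)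

theorem edirtyNode_eq_ndirty (hadj : ∀ v, ∃ w, G.Adj v w)
    (hE : edirty G S t = nEdgeDirty G S t) : edirtyNode G S t = ndirty G S t := by
  ext v
  refine ⟨fun ⟨hv0, e, he, hve⟩ => ?_, fun hv => ?_⟩
  · rw [hE] at he
    obtain ⟨heE, u, hue, hu⟩ := he
    obtain ⟨b, rfl⟩ := Sym2.mem_iff_exists.mp hve
    rcases Sym2.mem_iff.mp hue with rfl | rfl
    · exact hu
    · exact mem_ndirty_of_adj heE hv0 hu
  · obtain ⟨w, hvw⟩ := hadj v
    exact ⟨occ_eq_zero_of_mem_ndirty hv, s(v, w), hE ▸ ⟨hvw, v, Sym2.mem_mk_left _ _, hv⟩,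
      Sym2.mem_mk_left _ _⟩

theorem mem_edgeSet_diff_nEdgeDirty {e : Sym2 V} :
    e ∈ G.edgeSet \ nEdgeDirty G S t ↔ e ∈ G.edgeSet ∧ ∀ v ∈ e, v ∉ ndirty G S t := by
  simp [nEdgeDirty]

theorem eclearSubgraph_eq_nclearSubgraph (hE : edirty G S t = nEdgeDirty G S t)
    (hN : edirtyNode G S t = ndirty G S t) : eclearSubgraph G S t = nclearSubgraph G S t := by
  refine Subgraph.ext ?_ ?_
  · show {v | v ∉ edirtyNode G S t} ∪ {v | ∃ e ∈ G.edgeSet \ edirty G S t, v ∈ e} = _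
    rw [hN, hE]
    exact Set.union_eq_left.mpr fun v ⟨e, he, hve⟩ =>
      (mem_edgeSet_diff_nEdgeDirty.mp he).2 v hve
  · ext a b
    show G.Adj a b ∧ s(a, b) ∈ G.edgeSet \ edirty G S t ↔
      G.Adj a b ∧ a ∉ ndirty G S t ∧ b ∉ ndirty G S t
    rw [hE, mem_edgeSet_diff_nEdgeDirty, mem_edgeSet, Sym2.forall_mem_pair, and_self_left]

end EdgeGame

theorem stmt5_general {V : Type*} (G : SimpleGraph V) (hT : G.IsTree)
    (hne : G.edgeSet.Nonempty) (S : ℕ → GMove V) (hL : Legal G S)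
    (r : V) (hR : RootedAt S r)
    (hMN : ∀ t : ℕ, ndirty G S (t + 1) ⊆ ndirty G S t)
    (hCN : ∀ t : ℕ, 1 ≤ t → (nclearSubgraph G S t).Connected) :
    (∀ t : ℕ, { v | v ∉ edirtyNode G S t } = (ndirty G S t)ᶜ ∧
        G.edgeSet \ edirty G S t = G.edgeSet \ nEdgeDirty G S t) ∧
    (∀ t : ℕ, edirty G S (t + 1) ⊆ edirty G S t) ∧
    (∀ t : ℕ, 1 ≤ t → (eclearSubgraph G S t).Connected) := by
  have hadj : ∀ v, ∃ w, G.Adj v w := by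
    obtain ⟨e, he⟩ := hne
    induction e using Sym2.ind with
    | _ a b =>
      have : Nontrivial V := ⟨a, b, G.ne_of_adj he⟩
      exact hT.connected.preconnected.exists_adj_of_nontrivial
  have hS : IsMonotoneConnectedSearch G S r := ⟨hL, hR, hMN, hCN⟩
  have hE := hS.edirty_eq_nEdgeDirty hT.isAcyclic hadj
  have hN t := edirtyNode_eq_ndirty hadj (hE t)
  refine ⟨fun t => ⟨by rw [hN t]; rfl, by rw [hE t]⟩, fun t => ?_, fun t ht => ?_⟩
  · rw [hE, hE]
    exact fun e ⟨he, v, hve, hv⟩ => ⟨he, v, hve, hMN t hv⟩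
  · rw [eclearSubgraph_eq_nclearSubgraph (hE t) (hN t)]
    exact hCN t ht

/-- On a tree, an internal rooted search schedule that is monotone and connected in
the node game has, at every time, e-clear node/edge sets equal to the n-clear
node/edge sets; consequently it is also monotone and connected in the edge game. -/
theorem stmt5 {V : Type*} (G : SimpleGraph V) (hT : G.IsTree)
    (hne : G.edgeSet.Nonempty) (S : ℕ → GMove V) (hL : Legal G S) (hI : Internal S)
    (r : V) (hR : RootedAt S r)
    (hMN : ∀ t : ℕ, ndirty G S (t + 1) ⊆ ndirty G S t)
    (hCN : ∀ t : ℕ, 1 ≤ t → (nclearSubgraph G S t).Connected) :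
    (∀ t : ℕ, { v | v ∉ edirtyNode G S t } = (ndirty G S t)ᶜ ∧
        G.edgeSet \ edirty G S t = G.edgeSet \ nEdgeDirty G S t) ∧
    (∀ t : ℕ, edirty G S (t + 1) ⊆ edirty G S t) ∧
    (∀ t : ℕ, 1 ≤ t → (eclearSubgraph G S t).Connected) :=
  stmt5_general G hT hne S hL r hR hMN hCN
end
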